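/- For every integer k ≥ 2 and every q ∈ [0,1), one has (2^k − q)·ln((2^k − q)/(2^k − 1)) > 1 − q; consequently, with p = 1 − q and the convention 0·ln 0 = 0, 2^k·ln 2 / ( q·ln q − (2^k − q)·ln((2^k − 1)/(2^k − q)) ) ≤ 2^k·ln 2/(p + (1−p)·ln(1−p)). -/

import Mathlib

open Real

lemma aux_log_lb {x : ℝ} (hx : 0 < x) (hx1 : x ≠ 1) : 1 - 1/x < Real.log x := by
  have h := Real.log_lt_sub_one_of_pos (show (0:ℝ) < 1/x by positivity)
    (by simpa [eq_comm, div_eq_one_iff_eq hx.ne'] using hx1)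
  rw [one_div, Real.log_inv] at h
  rw [one_div]
  linarith [h]

/-- For every integer `k ≥ 2` and `q ∈ [0,1)`:
`(2^k − q)·ln((2^k − q)/(2^k − 1)) > 1 − q`, and consequently, with `p = 1 − q`
(the convention `0·ln 0 = 0` being automatic since `Real.log 0 = 0`),
`2^k ln 2 / (q ln q − (2^k − q) ln((2^k − 1)/(2^k − q))) ≤ 2^k ln 2/(p + (1−p) ln(1−p))`. -/
theorem upper_bound_comparison (k : ℕ) (hk : 2 ≤ k) (q : ℝ) (hq0 : 0 ≤ q) (hq1 : q < 1) :
    (1 - q < ((2:ℝ)^k - q) * Real.log (((2:ℝ)^k - q)/((2:ℝ)^k - 1))) ∧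
    (2:ℝ)^k * Real.log 2 /
        (q * Real.log q - ((2:ℝ)^k - q) * Real.log (((2:ℝ)^k - 1)/((2:ℝ)^k - q)))
      ≤ (2:ℝ)^k * Real.log 2 / ((1 - q) + (1 - (1 - q)) * Real.log (1 - (1 - q))) := by
  set N : ℝ := (2:ℝ)^k with hN
  have hN4 : (4:ℝ) ≤ N := by
    calc (4:ℝ) = 2^2 := by norm_num
    _ ≤ 2^k := by
      apply pow_le_pow_right₀ (by norm_num) hk
  have hN1 : (0:ℝ) < N - 1 := by linarith
  have hNq : (0:ℝ) < N - q := by linarith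
  have hgt : N - 1 < N - q := by linarith
  -- part 1
  have hx1 : (1:ℝ) < (N - q)/(N - 1) := (one_lt_div hN1).mpr hgt
  have hlog := aux_log_lb (x := (N - q)/(N - 1)) (by positivity) (ne_of_gt hx1)
  have h1 : 1 - q < (N - q) * Real.log ((N - q)/(N - 1)) := by
    have hinv : 1/((N - q)/(N - 1)) = (N - 1)/(N - q) := by
      rw [one_div, inv_div]
    rw [hinv] at hlog
    have : (N - q) * (1 - (N - 1)/(N - q)) < (N - q) * Real.log ((N - q)/(N - 1)) :=
      (mul_lt_mul_iff_right₀ hNq).mpr hlog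
    calc 1 - q = (N - q) * (1 - (N - 1)/(N - q)) := by
          field_simp
          ring
      _ < _ := this
  refine ⟨h1, ?_⟩
  -- denominators
  have hD2 : 0 < (1 - q) + q * Real.log q := by
    rcases eq_or_lt_of_le hq0 with h | h
    · simp [← h]
    · have := aux_log_lb h (ne_of_lt hq1)
      have : q * (1 - 1/q) < q * Real.log q := (mul_lt_mul_iff_right₀ h).mpr this
      have hq' : q * (1 - 1/q) = q - 1 := by field_simp
      linarith [hq'.symm ▸ this]
  have hflip : Real.log ((N - 1)/(N - q)) = - Real.log ((N - q)/(N - 1)) := by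
    rw [← Real.log_inv, inv_div]
  have hD1 : (1 - q) + q * Real.log q ≤
      q * Real.log q - (N - q) * Real.log ((N - 1)/(N - q)) := by
    rw [hflip]; nlinarith [h1]
  have hsimp : (1 - q) + (1 - (1 - q)) * Real.log (1 - (1 - q)) = (1 - q) + q * Real.log q := by
    ring_nf
  rw [hsimp]
  have hnum : 0 ≤ N * Real.log 2 := by positivity
  exact div_le_div_of_nonneg_left hnum hD2 hD1
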